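/- arXiv:2402.08131 — 2 statements merged into one kernel-verified Lean document; each statement's English description precedes it below -/
import Mathlib

section
/- Let G be a finite group and K = x^G with K^n = K for some n ≥ 2. Then K^{n−1} = [x,G] is a normal subgroup of G, and every prime dividing o(x) divides n−1. -/
open Pointwise

/-- The conjugacy class of `a` in `G`. -/
def conjClass (G : Type*) [Group G] (a : G) : Set G := {b | IsConj a b}

/-- The subgroup `[x,G]` generated by the commutators `[x,g] = x⁻¹ · x^g` for `g ∈ G`. -/
def commSub {G : Type*} [Group G] (x : G) : Subgroup G :=
  Subgroup.closure {z | ∃ g : G, z = x⁻¹ * (g⁻¹ * x * g)}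

/-!
Write `n = m + 1` and `K = x^G`. Every element of `K^j` lies in the coset `x^j [x,G]`, and
`x^m = x⁻¹ x^n ∈ [x,G]` because `x^n ∈ K^n = K`; hence `K^m ⊆ [x,G]`. Conversely
`K^m K^m = K^(m-1) K^n = K^m`, so in the finite group `G` the nonempty set `K^m` is a subgroup;
it contains every generator `x⁻¹ x^g = x^(m·o(x) - 1) x^g` of `[x,G]`, so `K^m = [x,G]`.
Finally `x · x^(mk) ∈ K K^m = K` for all `k`, so every `x^(mk+1)` is conjugate to `x` and has
order `o(x)`; a prime dividing `o(x)` but not `m` would divide some `mk + 1` and lower that order.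
-/

theorem IsConj.orderOf_eq {G : Type*} [Group G] {x y : G} (h : IsConj x y) :
    orderOf x = orderOf y := by
  obtain ⟨c, hc⟩ := h
  exact hc.orderOf_eq

section ConjClass

variable {G : Type*} [Group G] (x : G)

theorem conj_mem_conjClass (g : G) : g⁻¹ * x * g ∈ conjClass G x :=
  isConj_iff.mpr ⟨g⁻¹, by group⟩

theorem inv_mul_mem_commSub {k : G} (hk : k ∈ conjClass G x) : x⁻¹ * k ∈ commSub x := by
  obtain ⟨c, rfl⟩ := isConj_iff.mp hk
  have hgen : x⁻¹ * (c⁻¹⁻¹ * x * c⁻¹) ∈ commSub x := Subgroup.subset_closure ⟨c⁻¹, rfl⟩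
  rwa [inv_inv] at hgen

theorem commSub_normal : (commSub x).Normal := by
  refine Subgroup.normalizer_eq_top_iff.mp (top_le_iff.mp ?_)
  refine Subgroup.le_normalizer_closure_iff.mpr ?_
  rintro g - _ ⟨u, rfl⟩
  have hconj : g * (x⁻¹ * (u⁻¹ * x * u)) * g⁻¹ =
      (x⁻¹ * (g⁻¹⁻¹ * x * g⁻¹))⁻¹ * (x⁻¹ * ((u * g⁻¹)⁻¹ * x * (u * g⁻¹))) := by group
  rw [hconj]
  exact mul_mem (inv_mem (Subgroup.subset_closure ⟨_, rfl⟩)) (Subgroup.subset_closure ⟨_, rfl⟩)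

theorem inv_pow_mul_mem_commSub {j : ℕ} {k : G} (hk : k ∈ conjClass G x ^ j) :
    (x ^ j)⁻¹ * k ∈ commSub x := by
  induction j generalizing k with
  | zero =>
    rw [pow_zero, Set.mem_one] at hk
    simp [hk, one_mem]
  | succ j ih =>
    obtain ⟨a, ha, b, hb, rfl⟩ := Set.mem_mul.mp (pow_succ (conjClass G x) j ▸ hk)
    have hconj := (commSub_normal x).conj_mem _ (ih ha) x⁻¹
    have hsplit : (x ^ (j + 1))⁻¹ * (a * b) = x⁻¹ * ((x ^ j)⁻¹ * a) * x⁻¹⁻¹ * (x⁻¹ * b) := by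
      group
    rw [hsplit]
    exact mul_mem hconj (inv_mul_mem_commSub x hb)

end ConjClass

theorem isIdempotentElem_pow_of_pow_succ_eq {M : Type*} [Monoid M] {a : M} {m : ℕ}
    (hm : m ≠ 0) (h : a ^ (m + 1) = a) : IsIdempotentElem (a ^ m) := by
  obtain ⟨i, rfl⟩ := Nat.exists_eq_add_one_of_ne_zero hm
  calc a ^ (i + 1) * a ^ (i + 1) = a ^ i * a ^ (i + 1 + 1) := by
        rw [← pow_add, ← pow_add]; congr 1; omega
    _ = a ^ (i + 1) := by rw [h, pow_succ]

theorem Subgroup.coe_closure_eq_of_isIdempotentElem {G : Type*} [Group G] [Finite G] {S : Set G}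
    (hS : IsIdempotentElem S) (hne : S.Nonempty) : (Subgroup.closure S : Set G) = S := by
  obtain ⟨a, ha⟩ := hne
  have hone : (1 : G) ∈ S := by
    simpa [hS.pow_eq (orderOf_pos a).ne'] using Set.pow_mem_pow (n := orderOf a) ha
  let M : Submonoid G :=
    { carrier := S
      mul_mem' := fun hx hy => hS.eq ▸ Set.mul_mem_mul hx hy
      one_mem' := hone }
  calc (Subgroup.closure S : Set G) = Submonoid.closure (M : Set G) := by
        rw [← Subgroup.closure_toSubmonoid_of_finite]; rfl
    _ = S := by rw [Submonoid.closure_eq]; rfl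

section PowerEqualsClass

variable {G : Type*} [Group G] {x : G} {m : ℕ}

theorem pow_mem_commSub_of_pow_succ_eq (h : conjClass G x ^ (m + 1) = conjClass G x) :
    x ^ m ∈ commSub x := by
  have hmem : x ^ (m + 1) ∈ conjClass G x := h ▸ Set.pow_mem_pow (IsConj.refl x)
  simpa [pow_succ'] using inv_mul_mem_commSub x hmem

theorem conjClass_pow_subset_commSub (h : conjClass G x ^ (m + 1) = conjClass G x) :
    conjClass G x ^ m ⊆ commSub x := fun k hk => by
  simpa using mul_mem (pow_mem_commSub_of_pow_succ_eq h) (inv_pow_mul_mem_commSub x hk)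

theorem commSub_le_closure_conjClass_pow [Finite G] (hm : m ≠ 0)
    (h : conjClass G x ^ (m + 1) = conjClass G x) :
    commSub x ≤ Subgroup.closure (conjClass G x ^ m) := by
  have hidem := isIdempotentElem_pow_of_pow_succ_eq hm h
  obtain ⟨i, hi⟩ := Nat.exists_eq_add_one_of_ne_zero (Nat.mul_ne_zero hm (orderOf_pos x).ne')
  refine Subgroup.closure_mono ?_
  rintro _ ⟨g, rfl⟩
  -- `x⁻¹ * g⁻¹ x g = x ^ (m * orderOf x - 1) * g⁻¹ x g ∈ K ^ (m * orderOf x) = K ^ m`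
  have hinv : x⁻¹ = x ^ i := by
    refine (eq_inv_of_mul_eq_one_left ?_).symm
    rw [← pow_succ, ← hi, mul_comm, pow_mul, pow_orderOf_eq_one, one_pow]
  rw [← hidem.pow_eq (orderOf_pos x).ne', ← pow_mul, hi, pow_succ, hinv]
  exact Set.mul_mem_mul (Set.pow_mem_pow (IsConj.refl x)) (conj_mem_conjClass x g)

theorem conjClass_pow_eq_commSub [Finite G] (hm : m ≠ 0)
    (h : conjClass G x ^ (m + 1) = conjClass G x) :
    conjClass G x ^ m = commSub x := by
  refine (conjClass_pow_subset_commSub h).antisymm ?_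
  rw [← Subgroup.coe_closure_eq_of_isIdempotentElem (isIdempotentElem_pow_of_pow_succ_eq hm h)
    ⟨x ^ m, Set.pow_mem_pow (IsConj.refl x)⟩]
  exact commSub_le_closure_conjClass_pow hm h

theorem pow_mul_add_one_mem_conjClass [Finite G] (hm : m ≠ 0)
    (h : conjClass G x ^ (m + 1) = conjClass G x) (k : ℕ) :
    x ^ (m * k + 1) ∈ conjClass G x := by
  have hxmk : (x ^ m) ^ k ∈ conjClass G x ^ m := by
    rw [conjClass_pow_eq_commSub hm h]
    exact pow_mem (pow_mem_commSub_of_pow_succ_eq h) k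
  rw [← h, pow_succ', pow_succ', pow_mul]
  exact Set.mul_mem_mul (IsConj.refl x) hxmk

end PowerEqualsClass

theorem Nat.Prime.exists_dvd_mul_add_one {p m : ℕ} (hp : p.Prime) (hm : ¬p ∣ m) :
    ∃ k, p ∣ m * k + 1 := by
  have := Fact.mk hp
  have hm0 : (m : ZMod p) ≠ 0 := by rwa [Ne, ZMod.natCast_eq_zero_iff]
  refine ⟨(-(m : ZMod p)⁻¹).val, (ZMod.natCast_eq_zero_iff _ p).mp ?_⟩
  rw [Nat.cast_add, Nat.cast_mul, ZMod.natCast_zmod_val, mul_neg, mul_inv_cancel₀ hm0,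
    Nat.cast_one, neg_add_cancel]

theorem Nat.Prime.dvd_of_forall_orderOf_pow_mul_add_one {G : Type*} [Group G] {x : G} {m p : ℕ}
    (hp : p.Prime) (hx : IsOfFinOrder x) (hpx : p ∣ orderOf x)
    (h : ∀ k, orderOf (x ^ (m * k + 1)) = orderOf x) : p ∣ m := by
  by_contra hpm
  obtain ⟨k, hk⟩ := hp.exists_dvd_mul_add_one hpm
  have hgcd : 1 < (orderOf x).gcd (m * k + 1) :=
    hp.one_lt.trans_le (Nat.le_of_dvd (Nat.gcd_pos_of_pos_left _ hx.orderOf_pos)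
      (Nat.dvd_gcd hpx hk))
  have hlt := Nat.div_lt_self hx.orderOf_pos hgcd
  rw [← orderOf_pow' x (Nat.succ_ne_zero _), h] at hlt
  exact hlt.false

theorem stmt13 {G : Type*} [Group G] [Fintype G] (x : G) (n : ℕ) (hn : 2 ≤ n)
    (h : (conjClass G x) ^ n = conjClass G x) :
    (conjClass G x) ^ (n - 1) = (commSub x : Set G) ∧ (commSub x).Normal ∧
      ∀ p : ℕ, p.Prime → p ∣ orderOf x → p ∣ (n - 1) := by
  obtain ⟨m, rfl⟩ : ∃ m, n = m + 1 := ⟨n - 1, by omega⟩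
  have hm : m ≠ 0 := by omega
  rw [Nat.add_sub_cancel]
  refine ⟨conjClass_pow_eq_commSub hm h, commSub_normal x, fun p hp hpx => ?_⟩
  refine hp.dvd_of_forall_orderOf_pow_mul_add_one (isOfFinOrder_of_finite x) hpx fun k => ?_
  exact ((pow_mul_add_one_mem_conjClass hm h k).orderOf_eq).symm
end

section
/- Let G be a finite group and K a conjugacy class with K^n = D ∪ D⁻¹ for some n ≥ 2 and conjugacy class D. Then either |D| = |K|/2 or |D| = |K|. -/
open Pointwise

lemma conjClass_eq_orbit {G : Type*} [Group G] (a : G) :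
    conjClass G a = MulAction.orbit (ConjAct G) a := by
  ext b
  simp only [conjClass, Set.mem_setOf_eq, MulAction.mem_orbit_iff, ConjAct.smul_def, isConj_iff]
  constructor
  · rintro ⟨g, rfl⟩
    exact ⟨ConjAct.toConjAct g, by simp⟩
  · rintro ⟨g, rfl⟩
    exact ⟨ConjAct.ofConjAct g, rfl⟩

lemma card_conjClass_pow_dvd {G : Type*} [Group G] [Fintype G] (x : G) (m : ℕ) :
    Nat.card (conjClass G (x ^ m)) ∣ Nat.card (conjClass G x) := by
  rw [conjClass_eq_orbit, conjClass_eq_orbit,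
    Nat.card_congr (MulAction.orbitEquivQuotientStabilizer (ConjAct G) (x ^ m)),
    Nat.card_congr (MulAction.orbitEquivQuotientStabilizer (ConjAct G) x)]
  show (MulAction.stabilizer (ConjAct G) (x ^ m)).index ∣
    (MulAction.stabilizer (ConjAct G) x).index
  apply Subgroup.index_dvd_of_le
  intro g hg
  simp only [MulAction.mem_stabilizer_iff] at *
  calc g • x ^ m = (g • x) ^ m := by
        simpa only [MulDistribMulAction.toMonoidHom_apply] using
          ((MulDistribMulAction.toMonoidHom G g).map_pow x m)
    _ = x ^ m := by rw [hg]

lemma conjClass_eq_of_isConj {G : Type*} [Group G] {a b : G} (hab : IsConj a b) :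
    conjClass G a = conjClass G b := by
  ext c
  exact ⟨fun h => hab.symm.trans h, fun h => hab.trans h⟩

lemma card_conjClass_inv {G : Type*} [Group G] (x : G) :
    Nat.card (conjClass G x⁻¹) = Nat.card (conjClass G x) := by
  have : conjClass G x⁻¹ = (conjClass G x)⁻¹ := by
    ext b
    simp only [conjClass, Set.mem_setOf_eq, Set.mem_inv, isConj_iff]
    constructor
    · rintro ⟨g, rfl⟩; exact ⟨g, by group⟩
    · rintro ⟨g, hg⟩; exact ⟨g, inv_injective (by rw [← hg]; group)⟩
  rw [this, Nat.card_coe_set_eq, Nat.card_coe_set_eq, Set.ncard_inv]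

theorem stmt18 {G : Type*} [Group G] [Fintype G] (x d : G) (n : ℕ) (hn : 2 ≤ n)
    (h : (conjClass G x) ^ n = conjClass G d ∪ (conjClass G d)⁻¹) :
    2 * Nat.card (conjClass G d) = Nat.card (conjClass G x) ∨
      Nat.card (conjClass G d) = Nat.card (conjClass G x) := by
  have hxK : x ∈ conjClass G x := IsConj.refl x
  have hdD : d ∈ conjClass G d := IsConj.refl d
  have hxnn : x ^ n ∈ (conjClass G x) ^ n := Set.pow_mem_pow hxK
  -- divisibility
  have hdvd : Nat.card (conjClass G d) ∣ Nat.card (conjClass G x) := by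
    rw [h] at hxnn
    rcases hxnn with h1 | h1
    · rw [conjClass_eq_of_isConj (h1 : IsConj d (x ^ n))]
      exact card_conjClass_pow_dvd x n
    · have h2 : IsConj d ((x⁻¹) ^ n) := by
        have := Set.mem_inv.mp h1
        rw [inv_pow]
        exact this
      rw [conjClass_eq_of_isConj h2]
      exact (card_conjClass_pow_dvd x⁻¹ n).trans (card_conjClass_inv x).dvd
  -- upper bound
  have hle : Nat.card (conjClass G x) ≤ 2 * Nat.card (conjClass G d) := by
    have hsub : (fun a => x ^ (n - 1) * a) '' conjClass G x ⊆ (conjClass G x) ^ n := by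
      rintro _ ⟨a, ha, rfl⟩
      have hm : x ^ (n - 1) * a ∈ (conjClass G x) ^ (n - 1) * conjClass G x :=
        Set.mul_mem_mul (Set.pow_mem_pow hxK) ha
      rwa [← pow_succ, Nat.sub_add_cancel (le_trans one_le_two hn)] at hm
    have h1 : Nat.card (conjClass G x)
        ≤ Nat.card ((conjClass G d ∪ (conjClass G d)⁻¹ : Set G)) := by
      rw [Nat.card_coe_set_eq, Nat.card_coe_set_eq,
        ← Set.ncard_image_of_injective (conjClass G x) (mul_right_injective (x ^ (n - 1)))]
      rw [h] at hsub
      exact Set.ncard_le_ncard hsub (Set.toFinite _)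
    have h2 : Nat.card ((conjClass G d ∪ (conjClass G d)⁻¹ : Set G))
        ≤ 2 * Nat.card (conjClass G d) := by
      rw [Nat.card_coe_set_eq]
      calc (conjClass G d ∪ (conjClass G d)⁻¹).ncard
          ≤ (conjClass G d).ncard + ((conjClass G d)⁻¹).ncard := Set.ncard_union_le _ _
        _ = 2 * Nat.card (conjClass G d) := by
            rw [Set.ncard_inv, Nat.card_coe_set_eq]
            ring
    exact h1.trans h2
  have hDpos : 0 < Nat.card (conjClass G d) := by
    have : (conjClass G d).Nonempty := ⟨d, hdD⟩
    rw [Nat.card_coe_set_eq]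
    exact (Set.ncard_pos (Set.toFinite _)).mpr this
  have hKpos : 0 < Nat.card (conjClass G x) := by
    have : (conjClass G x).Nonempty := ⟨x, hxK⟩
    rw [Nat.card_coe_set_eq]
    exact (Set.ncard_pos (Set.toFinite _)).mpr this
  obtain ⟨t, ht⟩ := hdvd
  have ht2 : t ≤ 2 := by
    have h' : Nat.card (conjClass G d) * t ≤ Nat.card (conjClass G d) * 2 := by
      calc Nat.card (conjClass G d) * t = Nat.card (conjClass G x) := ht.symm
        _ ≤ 2 * Nat.card (conjClass G d) := hle
        _ = Nat.card (conjClass G d) * 2 := mul_comm _ _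
    exact Nat.le_of_mul_le_mul_left h' hDpos
  interval_cases t <;> omega
end
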